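/- Suppose every row of Ω satisfies |S_i| ≤ 2pd, where S_i = {j : (i,j) ∈ Ω}. Then every X ∈ ℝ^{d×r} satisfying the first-order optimality condition 2P_Ω(ZZᵀ)X = 2P_Ω(XXᵀ)X + λ∇R(X) satisfies max_i ‖X_i‖₂ ≤ 4·max{α, μ·√(rp/λ)}. -/
import Mathlib

open Matrix Finset

noncomputable section

/-- Euclidean norm of the `i`-th row of a matrix. -/
def rowNorm {d r : ℕ} (X : Matrix (Fin d) (Fin r) ℝ) (i : Fin d) : ℝ :=
  Real.sqrt (∑ j, (X i j) ^ 2)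

/-- Frobenius norm of a matrix. -/
def frobNorm {m n : ℕ} (A : Matrix (Fin m) (Fin n) ℝ) : ℝ :=
  Real.sqrt (∑ i, ∑ j, (A i j) ^ 2)

/-- The diagonal coefficients `Γᵢᵢ = 4(‖Xᵢ‖ − α)³/‖Xᵢ‖ · 1_{‖Xᵢ‖ ≥ α}`. -/
def gammaCoef {d r : ℕ} (α : ℝ) (X : Matrix (Fin d) (Fin r) ℝ) (i : Fin d) : ℝ :=
  if α ≤ rowNorm X i then 4 * (rowNorm X i - α) ^ 3 / rowNorm X i else 0

/-- Gradient `∇R(X) = Γ X` of the regularizer `R(X) = ∑ᵢ (‖Xᵢ‖ − α)⁴ 1_{‖Xᵢ‖ ≥ α}`. -/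
def gradRr {d r : ℕ} (α : ℝ) (X : Matrix (Fin d) (Fin r) ℝ) : Matrix (Fin d) (Fin r) ℝ :=
  fun i j => gammaCoef α X i * X i j

/-- `P_Ω` for a fixed (finite) set of observed entries. -/
def projF {d : ℕ} (Ω : Finset (Fin d × Fin d)) (A : Matrix (Fin d) (Fin d) ℝ) :
    Matrix (Fin d) (Fin d) ℝ :=
  fun i j => if (i, j) ∈ Ω then A i j else 0

lemma rowNorm_nonneg {d r : ℕ} (X : Matrix (Fin d) (Fin r) ℝ) (i : Fin d) : 0 ≤ rowNorm X i :=
  Real.sqrt_nonneg _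

lemma rowNorm_sq {d r : ℕ} (X : Matrix (Fin d) (Fin r) ℝ) (i : Fin d) :
    rowNorm X i ^ 2 = ∑ j, (X i j) ^ 2 :=
  Real.sq_sqrt (by positivity)

lemma abs_row_inner_le {d r : ℕ} (X : Matrix (Fin d) (Fin r) ℝ) (i k : Fin d) :
    |∑ j, X i j * X k j| ≤ rowNorm X i * rowNorm X k := by
  rcases abs_cases (∑ j, X i j * X k j) with ⟨h, _⟩ | ⟨h, _⟩ <;> rw [h]
  · exact Real.sum_mul_le_sqrt_mul_sqrt _ _ _
  · have h2 := Real.sum_mul_le_sqrt_mul_sqrt Finset.univ (fun j => -X i j) (fun j => X k j)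
    have h3 : ∑ j, -X i j * X k j = -∑ j, X i j * X k j := by
      rw [← Finset.sum_neg_distrib]; exact Finset.sum_congr rfl (fun j _ => by ring)
    have h4 : ∀ j : Fin r, (-X i j) ^ 2 = X i j ^ 2 := fun j => by ring
    rw [h3] at h2
    simpa [rowNorm, h4] using h2

lemma abs_row_inner_le' {d r : ℕ} (A B : Matrix (Fin d) (Fin r) ℝ) (i k : Fin d) :
    |∑ j, A i j * B k j| ≤ rowNorm A i * rowNorm B k := by
  rcases abs_cases (∑ j, A i j * B k j) with ⟨h, _⟩ | ⟨h, _⟩ <;> rw [h]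
  · exact Real.sum_mul_le_sqrt_mul_sqrt _ _ _
  · have h2 := Real.sum_mul_le_sqrt_mul_sqrt Finset.univ (fun j => -A i j) (fun j => B k j)
    have h3 : ∑ j, -A i j * B k j = -∑ j, A i j * B k j := by
      rw [← Finset.sum_neg_distrib]; exact Finset.sum_congr rfl (fun j _ => by ring)
    have h4 : ∀ j : Fin r, (-A i j) ^ 2 = A i j ^ 2 := fun j => by ring
    rw [h3] at h2
    simpa [rowNorm, h4] using h2

set_option maxHeartbeats 1000000 in
/-- if every row of `Ω` has at most `2pd` observed entries, then any `X`
satisfying the rank-`r` first-order optimality condition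
`2P_Ω(ZZᵀ)X = 2P_Ω(XXᵀ)X + λ∇R(X)` has `maxᵢ ‖Xᵢ‖ ≤ 4 max{α, μ√(rp/λ)}`. -/
theorem stmt12 (d r : ℕ) (hd : 0 < d) (hr : 0 < r) (μ α lam p : ℝ)
    (hμ : 0 < μ) (hα : 0 < α) (hlam : 0 < lam) (hp : 0 < p) (hp1 : p ≤ 1)
    (Z : Matrix (Fin d) (Fin r) ℝ) (hZF : frobNorm Z ^ 2 = r)
    (hZinc : ∀ i, rowNorm Z i ≤ μ * Real.sqrt (r / d))
    (Ω : Finset (Fin d × Fin d)) (hsym : ∀ i j : Fin d, (i, j) ∈ Ω ↔ (j, i) ∈ Ω)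
    (hrows : ∀ i : Fin d, ((Finset.univ.filter fun j => (i, j) ∈ Ω).card : ℝ) ≤ 2 * p * d)
    (X : Matrix (Fin d) (Fin r) ℝ)
    (hfoc : (2 : ℝ) • (projF Ω (Z * Zᵀ) * X) =
      (2 : ℝ) • (projF Ω (X * Xᵀ) * X) + lam • gradRr α X) :
    ∀ i, rowNorm X i ≤ 4 * max α (μ * Real.sqrt (r * p / lam)) := by
  -- pick the row of maximal norm
  obtain ⟨i₀, -, hmax⟩ := Finset.exists_max_image Finset.univ (rowNorm X)
    ⟨⟨0, hd⟩, Finset.mem_univ _⟩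
  set B := 4 * max α (μ * Real.sqrt (r * p / lam)) with hB
  suffices hkey : rowNorm X i₀ ≤ B by
    intro i; exact le_trans (hmax i (Finset.mem_univ i)) hkey
  set β := rowNorm X i₀ with hβ
  have hβ0 : 0 ≤ β := rowNorm_nonneg X i₀
  by_contra hcon
  push_neg at hcon
  -- β > 4α and β > 4 μ √(rp/λ)
  have hβα : 4 * α < β := lt_of_le_of_lt (by
    have := le_max_left α (μ * Real.sqrt (r * p / lam)); linarith) hcon
  have hβμ : 4 * (μ * Real.sqrt (r * p / lam)) < β := lt_of_le_of_lt (by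
    have := le_max_right α (μ * Real.sqrt (r * p / lam)); linarith) hcon
  have hβpos : 0 < β := by linarith
  -- scalar form of the FOC on row i₀
  have h1 : ∀ j, 2 * (∑ k, projF Ω (Z * Zᵀ) i₀ k * X k j)
      = 2 * (∑ k, projF Ω (X * Xᵀ) i₀ k * X k j) + lam * (gammaCoef α X i₀ * X i₀ j) := by
    intro j
    have := congrFun (congrFun hfoc i₀) j
    simpa [Matrix.mul_apply, Matrix.add_apply, Matrix.smul_apply, gradRr, smul_eq_mul] using this
  -- multiply by X i₀ j and sum over j
  have h2 : 2 * (∑ k, projF Ω (Z * Zᵀ) i₀ k * ∑ j, X k j * X i₀ j)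
      = 2 * (∑ k, projF Ω (X * Xᵀ) i₀ k * ∑ j, X k j * X i₀ j)
        + lam * gammaCoef α X i₀ * ∑ j, X i₀ j ^ 2 := by
    have e : ∀ (M : Matrix (Fin d) (Fin d) ℝ),
        ∑ j, (∑ k, M i₀ k * X k j) * X i₀ j = ∑ k, M i₀ k * ∑ j, X k j * X i₀ j := by
      intro M
      simp_rw [Finset.sum_mul, Finset.mul_sum, mul_assoc]
      exact Finset.sum_comm
    have := congrArg (fun M : Matrix (Fin d) (Fin r) ℝ => ∑ j, M i₀ j * X i₀ j) hfoc
    simp only [Matrix.add_apply, Matrix.smul_apply, smul_eq_mul, add_mul,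
      Finset.sum_add_distrib] at this
    have key : ∀ (M : Matrix (Fin d) (Fin d) ℝ),
        ∑ j, 2 * (M * X) i₀ j * X i₀ j = 2 * (∑ k, M i₀ k * ∑ j, X k j * X i₀ j) := by
      intro M
      rw [← e M, Finset.mul_sum]
      exact Finset.sum_congr rfl fun j _ => by rw [Matrix.mul_apply]; ring
    have lhs := key (projF Ω (Z * Zᵀ))
    have rhs1 := key (projF Ω (X * Xᵀ))
    have rhs2 : ∑ j, lam * gradRr α X i₀ j * X i₀ j
        = lam * gammaCoef α X i₀ * ∑ j, X i₀ j ^ 2 := by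
      rw [Finset.mul_sum]
      exact Finset.sum_congr rfl fun j _ => by simp [gradRr]; ring
    rw [lhs, rhs1, rhs2] at this
    exact this
  -- gammaCoef nonneg, and lower bound in our case
  have hΓnn : ∀ i, 0 ≤ gammaCoef α X i := by
    intro i; unfold gammaCoef
    split
    · have h0 := rowNorm_nonneg X i
      have : 0 ≤ rowNorm X i - α := by linarith [‹α ≤ rowNorm X i›]
      positivity
    · exact le_refl 0
  -- Bound the Z side
  set Γ := gammaCoef α X i₀ with hΓ
  have hsumsq : ∑ j, X i₀ j ^ 2 = β ^ 2 := (rowNorm_sq X i₀).symm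
  -- each term on the LHS is at most (indicator) * (μ^2 * (r/d) * β^2)
  have hL : ∑ k, projF Ω (Z * Zᵀ) i₀ k * ∑ j, X k j * X i₀ j
      ≤ (Finset.univ.filter fun k => (i₀, k) ∈ Ω).card * (μ ^ 2 * (r / d) * β ^ 2) := by
    have hterm : ∀ k : Fin d, projF Ω (Z * Zᵀ) i₀ k * ∑ j, X k j * X i₀ j
        ≤ if (i₀, k) ∈ Ω then μ ^ 2 * (r / d) * β ^ 2 else 0 := by
      intro k
      unfold projF
      by_cases hk : (i₀, k) ∈ Ω
      · simp only [hk, if_true]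
        have hZZ : |(Z * Zᵀ) i₀ k| ≤ μ ^ 2 * (r / d) := by
          have h1 : |(Z * Zᵀ) i₀ k| ≤ rowNorm Z i₀ * rowNorm Z k := by
            have : (Z * Zᵀ) i₀ k = ∑ j, Z i₀ j * Z k j := by
              simp [Matrix.mul_apply, Matrix.transpose_apply]
            rw [this]; exact abs_row_inner_le Z i₀ k
          have h2 : rowNorm Z i₀ * rowNorm Z k ≤ (μ * Real.sqrt (r / d)) ^ 2 := by
            rw [sq]
            exact mul_le_mul (hZinc i₀) (hZinc k) (rowNorm_nonneg Z k)
              (by positivity)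
          have h3 : (μ * Real.sqrt (r / d)) ^ 2 = μ ^ 2 * (r / d) := by
            rw [mul_pow, Real.sq_sqrt (by positivity)]
          linarith
        have hXX : |∑ j, X k j * X i₀ j| ≤ β ^ 2 := by
          have h1 := abs_row_inner_le X k i₀
          have h2 : rowNorm X k * rowNorm X i₀ ≤ β * β :=
            mul_le_mul (hmax k (Finset.mem_univ k)) (le_refl _) (rowNorm_nonneg X i₀) hβ0
          nlinarith
        calc (Z * Zᵀ) i₀ k * ∑ j, X k j * X i₀ j
            ≤ |(Z * Zᵀ) i₀ k * ∑ j, X k j * X i₀ j| := le_abs_self _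
          _ = |(Z * Zᵀ) i₀ k| * |∑ j, X k j * X i₀ j| := abs_mul _ _
          _ ≤ (μ ^ 2 * (r / d)) * β ^ 2 := by
              apply mul_le_mul hZZ hXX (abs_nonneg _) (by positivity)
          _ = μ ^ 2 * (r / d) * β ^ 2 := by ring
      · simp [hk]
    calc ∑ k, projF Ω (Z * Zᵀ) i₀ k * ∑ j, X k j * X i₀ j
        ≤ ∑ k, if (i₀, k) ∈ Ω then μ ^ 2 * (r / d) * β ^ 2 else 0 :=
          Finset.sum_le_sum fun k _ => hterm k
      _ = (Finset.univ.filter fun k => (i₀, k) ∈ Ω).card * (μ ^ 2 * (r / d) * β ^ 2) := by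
          rw [Finset.sum_ite, Finset.sum_const, Finset.sum_const_zero, add_zero,
            nsmul_eq_mul]
  -- the X side is nonneg plus the gamma term
  have hQ : 0 ≤ ∑ k, projF Ω (X * Xᵀ) i₀ k * ∑ j, X k j * X i₀ j := by
    apply Finset.sum_nonneg
    intro k _
    unfold projF
    by_cases hk : (i₀, k) ∈ Ω
    · simp only [hk, if_true]
      have : (X * Xᵀ) i₀ k = ∑ j, X k j * X i₀ j := by
        simp [Matrix.mul_apply, Matrix.transpose_apply, mul_comm]
      rw [this]
      exact mul_self_nonneg _
    · simp [hk]
  -- combine: lam * Γ * β^2 ≤ 2 * card * (μ^2 (r/d) β^2) ≤ 4 p μ^2 r β^2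
  have hcard := hrows i₀
  have hd0 : (0:ℝ) < d := by exact_mod_cast hd
  have hmain : lam * Γ * β ^ 2 ≤ 4 * p * μ ^ 2 * r * β ^ 2 := by
    have hc : ((Finset.univ.filter fun k => (i₀, k) ∈ Ω).card : ℝ) * (μ ^ 2 * (r / d) * β ^ 2)
        ≤ (2 * p * d) * (μ ^ 2 * (r / d) * β ^ 2) := by
      apply mul_le_mul_of_nonneg_right hcard (by positivity)
    have heq : (2 * p * d) * (μ ^ 2 * ((r : ℝ) / d) * β ^ 2) = 2 * p * μ ^ 2 * r * β ^ 2 := by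
      field_simp
    rw [hsumsq] at h2
    nlinarith [hL, hQ]
  -- in our case Γ = 4 (β - α)^3 / β and β - α ≥ 3β/4
  have hαβ : α ≤ β := by linarith
  have hΓval : Γ = 4 * (β - α) ^ 3 / β := by
    rw [hΓ]; unfold gammaCoef; rw [if_pos hαβ]
  have h34 : 3 * β / 4 ≤ β - α := by linarith
  have hΓlb : 4 * (3 * β / 4) ^ 3 / β ≤ Γ := by
    rw [hΓval]
    have h0 : (0:ℝ) ≤ 3 * β / 4 := by positivity
    gcongr
  have hΓβ : 4 * (3 * β / 4) ^ 3 / β * β ^ 2 = (27 / 16) * β ^ 4 := by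
    field_simp; ring
  have hfin : lam * ((27 / 16) * β ^ 4) ≤ 4 * p * μ ^ 2 * r * β ^ 2 := by
    have h5 := mul_le_mul_of_nonneg_left (mul_le_mul_of_nonneg_right hΓlb (sq_nonneg β))
      (le_of_lt hlam)
    rw [hΓβ] at h5
    calc lam * ((27 / 16) * β ^ 4) ≤ lam * (Γ * β ^ 2) := h5
      _ = lam * Γ * β ^ 2 := by ring
      _ ≤ 4 * p * μ ^ 2 * r * β ^ 2 := hmain
  have hβ2pos : (0:ℝ) < β ^ 2 := by positivity
  have hrca : (0:ℝ) ≤ (r:ℝ) := Nat.cast_nonneg r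
  have h9 : lam * (27 / 16) * β ^ 2 ≤ 4 * p * μ ^ 2 * (r:ℝ) := by
    have h10 : (lam * (27 / 16) * β ^ 2) * β ^ 2 ≤ (4 * p * μ ^ 2 * (r:ℝ)) * β ^ 2 := by
      calc (lam * (27 / 16) * β ^ 2) * β ^ 2 = lam * ((27 / 16) * β ^ 4) := by ring
        _ ≤ 4 * p * μ ^ 2 * (r:ℝ) * β ^ 2 := hfin
        _ = (4 * p * μ ^ 2 * (r:ℝ)) * β ^ 2 := by ring
    exact le_of_mul_le_mul_right h10 hβ2pos
  have hβ2' : lam * β ^ 2 ≤ 16 * μ ^ 2 * ((r:ℝ) * p) := by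
    have hnn : (0:ℝ) ≤ p * μ ^ 2 * (r:ℝ) :=
      mul_nonneg (mul_nonneg hp.le (sq_nonneg μ)) hrca
    linarith
  have hβ2 : β ^ 2 ≤ 16 * μ ^ 2 * ((r:ℝ) * p / lam) := by
    rw [← sub_nonneg]
    have h6 : 16 * μ ^ 2 * ((r:ℝ) * p / lam) - β ^ 2
        = (16 * μ ^ 2 * ((r:ℝ) * p) - lam * β ^ 2) / lam := by field_simp
    rw [h6]
    exact div_nonneg (by linarith) hlam.le
  -- conclude β ≤ 4 μ √(rp/λ), contradiction
  have hrp : (0:ℝ) ≤ (r:ℝ) * p / lam := by positivity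
  have hsq : (4 * (μ * Real.sqrt ((r:ℝ) * p / lam))) ^ 2 = 16 * μ ^ 2 * ((r:ℝ) * p / lam) := by
    rw [mul_pow, mul_pow, Real.sq_sqrt hrp]; ring
  have hble : β ≤ 4 * (μ * Real.sqrt ((r:ℝ) * p / lam)) := by
    have h7 : β ^ 2 ≤ (4 * (μ * Real.sqrt ((r:ℝ) * p / lam))) ^ 2 := by rw [hsq]; exact hβ2
    have h8 := Real.sqrt_le_sqrt h7
    rwa [Real.sqrt_sq hβ0, Real.sqrt_sq (by positivity)] at h8
  linarith
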